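/- arXiv:1210.1548 — 3 statements merged into one kernel-verified Lean document; each statement's English description precedes it below -/
import Mathlib

section
/- If a sequence (B_n) of Borel subsets of a standard probability space is asymptotically invariant for a measure-preserving countable Borel equivalence relation R (i.e., μ(φ(B_n) Δ B_n) → 0 for every φ in the full group [R]), then for every Borel map φ : Y → Y whose graph is contained in R (not necessarily bijective), μ(φ⁻¹(B_n) Δ B_n) → 0. -/
/-!
Cover `Y`, up to a null set, by countably many Borel pieces `P` on which `φ` is injective and
which meet their image `φ '' P` only at fixed points of `φ`. On such a piece `φ` extends to a
Borel involution `ψ` with graph in `R`; since `ψ '' B = ψ ⁻¹' B`, asymptotic invariance under `ψ`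
controls `φ ⁻¹' B n ∆ B n` on `P`, and finitely many pieces carry all but `ε` of the mass.

The injectivity pieces come from disintegrating the law of `(φ y, y)`: the conditional law
`κ z` lives on the countable fibre `φ ⁻¹' {z}`, so almost every `y` is an atom of `κ (φ y)`.
Along a Borel linear order of `Y`, distinct points of one fibre then have disjoint non-empty
intervals `(κ (φ y) {< y}, κ (φ y) {≤ y})`, and a rational in that interval singles `y` out.
-/

open MeasureTheory ProbabilityTheory Filter Topology Set Function
open scoped ENNReal

lemma ProbabilityTheory.Kernel.measurable_apply_setOf_mem {α β γ : Type*} [MeasurableSpace α]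
    [MeasurableSpace β] [MeasurableSpace γ] (κ : Kernel α β) [IsSFiniteKernel κ]
    {S : Set (γ × β)} (hS : MeasurableSet S) :
    Measurable fun p : α × γ => κ p.1 {b | (p.2, b) ∈ S} :=
  Kernel.measurable_kernel_prodMk_left (κ := κ.prodMkRight γ)
    ((measurable_fst.snd.prodMk measurable_snd) hS)

lemma ae_measure_singleton_ne_zero {α : Type*} [MeasurableSpace α] {ν : Measure α} {s : Set α}
    (hs : s.Countable) (hν : ∀ᵐ x ∂ν, x ∈ s) : ∀ᵐ x ∂ν, ν {x} ≠ 0 := by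
  have hnull : ν (s ∩ {x | ν {x} = 0}) = 0 := by
    rw [← biUnion_of_singleton (s ∩ _)]
    exact (measure_biUnion_null_iff (hs.mono inter_subset_left)).2 fun x hx => hx.2
  filter_upwards [hν, measure_eq_zero_iff_ae_notMem.1 hnull] with x hxs hx
  exact fun h => hx ⟨hxs, h⟩

lemma ae_condKernel_map_graph_singleton_ne_zero {X Z : Type*} [MeasurableSpace X]
    [StandardBorelSpace X] [Nonempty X] [MeasurableSpace Z] [MeasurableEq Z]
    (μ : Measure X) [IsFiniteMeasure μ] {φ : X → Z} (hφ : Measurable φ)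
    (hfib : ∀ z, (φ ⁻¹' {z}).Countable) :
    ∀ᵐ x ∂μ, (μ.map fun x => (φ x, x)).condKernel (φ x) {x} ≠ 0 := by
  set ρ := μ.map fun x => (φ x, x)
  have hg : Measurable fun x => (φ x, x) := hφ.prodMk measurable_id
  have hgraph : ∀ᵐ p ∂ρ, φ p.2 = p.1 :=
    (ae_map_iff hg.aemeasurable (measurableSet_eq_fun (hφ.comp measurable_snd) measurable_fst)).2
      (ae_of_all _ fun _ => rfl)
  rw [← ρ.disintegrate ρ.condKernel] at hgraph
  have hatoms : ∀ᵐ p ∂(ρ.fst ⊗ₘ ρ.condKernel), ρ.condKernel p.1 {p.2} ≠ 0 := by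
    refine Measure.ae_compProd_of_ae_ae ?_ ?_
    · exact (ρ.condKernel.measurable_apply_setOf_mem
        (measurableSet_eq_fun measurable_snd measurable_fst)) (measurableSet_singleton 0).compl
    · filter_upwards [Measure.ae_ae_of_ae_compProd hgraph] with z hz
      exact ae_measure_singleton_ne_zero (hfib z) hz
  rw [ρ.disintegrate ρ.condKernel] at hatoms
  exact ae_of_ae_map hg.aemeasurable hatoms

theorem exists_injOn_cover_ae {X Z : Type*} [MeasurableSpace X] [StandardBorelSpace X]
    [MeasurableSpace Z] [MeasurableEq Z] (μ : Measure X) [IsFiniteMeasure μ] {φ : X → Z}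
    (hφ : Measurable φ) (hfib : ∀ z, (φ ⁻¹' {z}).Countable) :
    ∃ A : ℚ → Set X, (∀ q, MeasurableSet (A q)) ∧ (∀ q, InjOn φ (A q)) ∧
      ∀ᵐ x ∂μ, ∃ q, x ∈ A q := by
  rcases isEmpty_or_nonempty X with hX | hX
  · exact ⟨fun _ => ∅, fun _ => .empty, fun _ => injOn_empty _, ae_of_all _ isEmptyElim⟩
  obtain ⟨e, he⟩ := exists_measurableEmbedding_real X
  set κ := (μ.map fun x => (φ x, x)).condKernel
  set r : X → ℝ≥0∞ := fun x => κ (φ x) {x' | e x' < e x}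
  set F : X → ℝ≥0∞ := fun x => κ (φ x) {x' | e x' ≤ e x}
  have hg : Measurable fun x => (φ x, x) := hφ.prodMk measurable_id
  have hr : Measurable r := (κ.measurable_apply_setOf_mem (measurableSet_lt
    (he.measurable.comp measurable_snd) (he.measurable.comp measurable_fst))).comp hg
  have hF : Measurable F := (κ.measurable_apply_setOf_mem (measurableSet_le
    (he.measurable.comp measurable_snd) (he.measurable.comp measurable_fst))).comp hg
  have hjump : ∀ᵐ x ∂μ, r x < F x := by
    filter_upwards [ae_condKernel_map_graph_singleton_ne_zero μ hφ hfib] with x hx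
    have hsplit : {x' | e x' ≤ e x} = {x' | e x' < e x} ∪ {x} := by
      ext; simp [le_iff_lt_or_eq, he.injective.eq_iff, or_comm]
    calc r x < r x + κ (φ x) {x} := ENNReal.lt_add_right (measure_ne_top _ _) hx
      _ = F x := by
        rw [← measure_union (by simp) (measurableSet_singleton x), ← hsplit]
  have hstep : ∀ x x', φ x = φ x' → e x < e x' → F x ≤ r x' := fun x x' h hlt => by
    simp only [F, r, h]
    exact measure_mono fun y (hy : e y ≤ e x) => hy.trans_lt hlt
  refine ⟨fun q => {x | r x < Real.toNNReal q ∧ (Real.toNNReal q : ℝ≥0∞) < F x},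
    fun q => (measurableSet_lt hr measurable_const).inter (measurableSet_lt measurable_const hF),
    fun q x hx x' hx' h => ?_, ?_⟩
  · by_contra hne
    rcases lt_or_gt_of_ne (he.injective.ne hne) with hlt | hlt
    · exact (hstep x x' h hlt).not_gt (hx'.1.trans hx.2)
    · exact (hstep x' x h.symm hlt).not_gt (hx.1.trans hx'.2)
  · filter_upwards [hjump] with x hx
    obtain ⟨q, -, hq⟩ := ENNReal.lt_iff_exists_rat_btwn.1 hx
    exact ⟨q, hq⟩

theorem exists_measurable_cover_apply_mem_imp_eq {Y : Type*} [MeasurableSpace Y]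
    [MeasurableSpace.CountablySeparated Y] [MeasurableEq Y] {φ : Y → Y} (hφ : Measurable φ) :
    ∃ W : ℕ × Bool → Set Y, (∀ j, MeasurableSet (W j)) ∧
      (∀ j, ∀ x ∈ W j, φ x ∈ W j → φ x = x) ∧ ∀ y, ∃ j, y ∈ W j := by
  classical
  obtain ⟨S, hS, hsep⟩ := exists_seq_separating Y MeasurableSet.empty univ
  let V : ℕ × Bool → Set Y := fun j => bif j.2 then S j.1 else (S j.1)ᶜ
  have hV : ∀ j, MeasurableSet (V j) := fun ⟨n, b⟩ => by cases b; exacts [(hS n).compl, hS n]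
  have hmemV : ∀ y n, y ∈ V (n, decide (y ∈ S n)) := fun y n => by
    by_cases h : y ∈ S n <;> simp [V, h]
  refine ⟨fun j => V j ∩ ((φ ⁻¹' V j)ᶜ ∪ {x | φ x = x}),
    fun j => (hV j).inter ((hφ (hV j)).compl.union (measurableSet_eq_fun hφ measurable_id)),
    fun j x ⟨_, hx⟩ ⟨hφx, _⟩ => hx.resolve_left (not_not.2 hφx), fun y => ?_⟩
  by_cases hy : φ y = y
  · exact ⟨_, hmemV y 0, Or.inr hy⟩
  obtain ⟨n, hn⟩ : ∃ n, ¬(y ∈ S n ↔ φ y ∈ S n) := by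
    by_contra! h
    exact hy (hsep _ trivial _ trivial h).symm
  refine ⟨_, hmemV y n, Or.inl fun h => hn ?_⟩
  by_cases h' : y ∈ S n <;> simp_all [V]

theorem exists_involutive_extension {Y : Type*} [MeasurableSpace Y] [StandardBorelSpace Y]
    {φ : Y → Y} (hφ : Measurable φ) {P : Set Y} (hP : MeasurableSet P) (hinj : InjOn φ P)
    (hret : ∀ x ∈ P, φ x ∈ P → φ x = x) :
    ∃ ψ : Y → Y, Measurable ψ ∧ Involutive ψ ∧ EqOn ψ φ P ∧
      ∀ y, ψ y = y ∨ ψ y = φ y ∨ φ (ψ y) = y := by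
  classical
  have : StandardBorelSpace P := hP.standardBorel
  have hf : MeasurableEmbedding (P.domRestrict φ) :=
    (hφ.comp measurable_subtype_coe).measurableEmbedding (injOn_iff_injective.1 hinj)
  let g : Y → Y := fun y =>
    if h : y ∈ range (P.domRestrict φ) then hf.equivRange.symm ⟨y, h⟩ else y
  have hg : Measurable g := Measurable.dite
    (measurable_subtype_coe.comp hf.equivRange.symm.measurable) measurable_subtype_coe
    hf.measurableSet_range
  have hgφ : ∀ x ∈ P, g (φ x) = x := fun x hx => by
    simp only [g]
    rw [dif_pos ⟨⟨x, hx⟩, rfl⟩]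
    exact congrArg Subtype.val (hf.equivRange_symm_apply_mk ⟨x, hx⟩)
  have hφg : ∀ y ∈ φ '' P, g y ∈ P ∧ φ (g y) = y := fun y hy => by
    rw [← range_domRestrict] at hy
    simp only [g, dif_pos hy]
    refine ⟨Subtype.prop _, ?_⟩
    have := congrArg Subtype.val (hf.equivRange.apply_symm_apply ⟨y, hy⟩)
    rwa [hf.equivRange_apply] at this
  have hg_out : ∀ y ∉ φ '' P, g y = y := fun y hy => by
    rw [← range_domRestrict] at hy
    simp only [g, dif_neg hy]
  refine ⟨P.piecewise φ g, Measurable.piecewise hP hφ hg, fun y => ?_,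
    fun x hx => piecewise_eq_of_mem _ _ _ hx, fun y => ?_⟩
  · by_cases hy : y ∈ P
    · rw [piecewise_eq_of_mem _ _ _ hy]
      by_cases hφy : φ y ∈ P
      · rw [piecewise_eq_of_mem _ _ _ hφy, hret y hy hφy, hret y hy hφy]
      · rw [piecewise_eq_of_notMem _ _ _ hφy, hgφ y hy]
    · rw [piecewise_eq_of_notMem _ _ _ hy]
      by_cases hyP : y ∈ φ '' P
      · obtain ⟨hgy, hφgy⟩ := hφg y hyP
        rw [piecewise_eq_of_mem _ _ _ hgy, hφgy]
      · rw [hg_out y hyP, piecewise_eq_of_notMem _ _ _ hy, hg_out y hyP]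
  · by_cases hy : y ∈ P
    · exact Or.inr (Or.inl (piecewise_eq_of_mem _ _ _ hy))
    rw [piecewise_eq_of_notMem _ _ _ hy]
    by_cases hyP : y ∈ φ '' P
    · exact Or.inr (Or.inr (hφg y hyP).2)
    · exact Or.inl (hg_out y hyP)

theorem exists_involutive_cover_ae {Y : Type*} [MeasurableSpace Y] [StandardBorelSpace Y]
    (μ : Measure Y) [IsFiniteMeasure μ] {φ : Y → Y} (hφ : Measurable φ)
    (hfib : ∀ y, (φ ⁻¹' {y}).Countable) :
    ∃ (ι : Type) (_ : Countable ι) (Z : ι → Set Y) (ψ : ι → Y → Y),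
      (∀ i, MeasurableSet (Z i)) ∧ (∀ᵐ y ∂μ, ∃ i, y ∈ Z i) ∧
      ∀ i, Measurable (ψ i) ∧ Involutive (ψ i) ∧ EqOn (ψ i) φ (Z i) ∧
        ∀ y, ψ i y = y ∨ ψ i y = φ y ∨ φ (ψ i y) = y := by
  obtain ⟨A, hA, hAinj, hAcover⟩ := exists_injOn_cover_ae μ hφ hfib
  obtain ⟨W, hW, hWret, hWcover⟩ := exists_measurable_cover_apply_mem_imp_eq hφ
  have hZ : ∀ i : ℚ × (ℕ × Bool), MeasurableSet (A i.1 ∩ W i.2) := fun i =>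
    (hA i.1).inter (hW i.2)
  choose ψ hψ using fun i : ℚ × (ℕ × Bool) => exists_involutive_extension hφ (hZ i)
    ((hAinj i.1).mono inter_subset_left) fun x hx hφx => hWret i.2 x hx.2 hφx.2
  refine ⟨ℚ × (ℕ × Bool), inferInstance, fun i => A i.1 ∩ W i.2, ψ, hZ, ?_, hψ⟩
  filter_upwards [hAcover] with y ⟨q, hq⟩
  obtain ⟨j, hj⟩ := hWcover y
  exact ⟨(q, j), hq, hj⟩

theorem tendsto_measure_zero_of_ae_cover {α β ι : Type*} [MeasurableSpace α] [Countable ι]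
    {μ : Measure α} [IsFiniteMeasure μ] {Z : ι → Set α} (hZ : ∀ i, MeasurableSet (Z i))
    (hcover : ∀ᵐ x ∂μ, ∃ i, x ∈ Z i) {l : Filter β} {S : β → Set α} {T : ι → β → Set α}
    (hST : ∀ i n, Z i ∩ S n ⊆ T i n) (hT : ∀ i, Tendsto (fun n => μ (T i n)) l (𝓝 0)) :
    Tendsto (fun n => μ (S n)) l (𝓝 0) := by
  set U : Finset ι → Set α := fun t => ⋃ i ∈ t, Z i
  have hrest : Tendsto (fun t => μ (U t)ᶜ) atTop (𝓝 0) := by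
    have hnull : μ (⋂ t, (U t)ᶜ) = 0 := by
      refine measure_mono_null (fun x hx => ?_) (ae_iff.1 hcover)
      rintro ⟨i, hi⟩
      exact mem_iInter.1 hx {i} (mem_biUnion (Finset.mem_singleton_self i) hi)
    rw [← hnull]
    exact tendsto_measure_iInter_atTop
      (fun t => (Finset.measurableSet_biUnion t fun i _ => hZ i).compl.nullMeasurableSet)
      (fun t t' h => compl_subset_compl.2 (biUnion_subset_biUnion_left h)) ⟨∅, measure_ne_top μ _⟩
  rw [ENNReal.tendsto_nhds_zero]
  intro ε hε
  obtain ⟨t, ht⟩ := (ENNReal.tendsto_nhds_zero.1 hrest (ε / 2) (ENNReal.half_pos hε.ne')).exists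
  have hsum : Tendsto (fun n => ∑ i ∈ t, μ (T i n)) l (𝓝 0) := by
    simpa using tendsto_finsetSum t fun i _ => hT i
  filter_upwards [ENNReal.tendsto_nhds_zero.1 hsum (ε / 2) (ENNReal.half_pos hε.ne')] with n hn
  have hS : S n ⊆ (⋃ i ∈ t, T i n) ∪ (U t)ᶜ := fun x hx => by
    by_cases hxU : x ∈ U t
    · obtain ⟨i, hi, hxi⟩ := mem_iUnion₂.1 hxU
      exact Or.inl (mem_biUnion hi (hST i n ⟨hxi, hx⟩))
    · exact Or.inr hxU
  calc μ (S n) ≤ μ (⋃ i ∈ t, T i n) + μ (U t)ᶜ := (measure_mono hS).trans (measure_union_le _ _)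
    _ ≤ ∑ i ∈ t, μ (T i n) + μ (U t)ᶜ := by gcongr; exact measure_biUnion_finset_le _ _
    _ ≤ ε / 2 + ε / 2 := add_le_add hn ht
    _ = ε := ENNReal.add_halves ε

theorem asymptotically_invariant_of_full_group_for_graph_maps_general
    {Y : Type*} [MeasurableSpace Y] [StandardBorelSpace Y]
    (μ : Measure Y) [IsProbabilityMeasure μ]
    (R : Y → Y → Prop) (hR : Equivalence R)
    (hcount : ∀ y, {z | R y z}.Countable)
    (B : ℕ → Set Y)
    (hai : ∀ φ : Y ≃ᵐ Y, (∀ y, R y (φ y)) →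
      Tendsto (fun n => μ (symmDiff (⇑φ '' B n) (B n))) atTop (𝓝 0))
    (φ : Y → Y) (hφ : Measurable φ) (hgraph : ∀ y, R y (φ y)) :
    Tendsto (fun n => μ (symmDiff (φ ⁻¹' B n) (B n))) atTop (𝓝 0) := by
  have hfib : ∀ y, (φ ⁻¹' {y}).Countable := fun y =>
    (hcount y).mono fun z (hz : φ z = y) => hR.symm (hz ▸ hgraph z)
  obtain ⟨ι, _, Z, ψ, hZ, hcover, hψ⟩ := exists_involutive_cover_ae μ hφ hfib
  refine tendsto_measure_zero_of_ae_cover hZ hcover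
    (T := fun i n => symmDiff (ψ i ⁻¹' B n) (B n)) (fun i n y ⟨hy, hyB⟩ => ?_) fun i => ?_
  · simpa only [mem_symmDiff, mem_preimage, (hψ i).2.2.1 hy] using hyB
  obtain ⟨hψm, hψinv, -, hψcases⟩ := hψ i
  have hψR : ∀ y, R y (ψ i y) := fun y => by
    rcases hψcases y with h | h | h
    · rw [h]; exact hR.refl y
    · rw [h]; exact hgraph y
    · exact hR.symm (by simpa only [h] using hgraph (ψ i y))
  have := hai (.ofInvolutive _ hψinv hψm) hψR
  rwa [show ⇑(MeasurableEquiv.ofInvolutive _ hψinv hψm) = ψ i from rfl,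
    hψinv.image_eq_preimage_symm] at this

/-- If a sequence `(B n)` of Borel subsets of a standard probability
space is asymptotically invariant for a measure-preserving countable Borel equivalence
relation `R` (i.e. `μ (φ '' B n ∆ B n) → 0` for every `φ` in the full group `[R]`),
then for every Borel map `φ : Y → Y` whose graph is contained in `R` (not necessarily
bijective), `μ (φ ⁻¹' B n ∆ B n) → 0`. -/
theorem asymptotically_invariant_of_full_group_for_graph_maps
    {Y : Type*} [MeasurableSpace Y] [StandardBorelSpace Y]
    (μ : Measure Y) [IsProbabilityMeasure μ]
    (R : Y → Y → Prop) (hR : Equivalence R)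
    (hcount : ∀ y, {z | R y z}.Countable)
    (hmeasR : MeasurableSet {p : Y × Y | R p.1 p.2})
    (hpres : ∀ φ : Y ≃ᵐ Y, (∀ y, R y (φ y)) → MeasurePreserving φ μ μ)
    (B : ℕ → Set Y) (hB : ∀ n, MeasurableSet (B n))
    (hai : ∀ φ : Y ≃ᵐ Y, (∀ y, R y (φ y)) →
      Tendsto (fun n => μ (symmDiff (⇑φ '' B n) (B n))) atTop (𝓝 0))
    (φ : Y → Y) (hφ : Measurable φ) (hgraph : ∀ y, R y (φ y)) :
    Tendsto (fun n => μ (symmDiff (φ ⁻¹' B n) (B n))) atTop (𝓝 0) :=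
  asymptotically_invariant_of_full_group_for_graph_maps_general μ R hR hcount B hai φ hφ hgraph
end

section
/- If Γ ⊷ (Y, μ) is a strongly ergodic measure-preserving action of a countable group on a standard probability space and Z is a Borel subset of Y with μ(Z) > 0, then the restriction of the orbit equivalence relation R_{Γ⊷Y} to Z, with the normalized measure μ/μ(Z), is strongly ergodic. -/
/-!
Let `B n ⊆ Z` be asymptotically invariant under the full group of the restricted relation. For
each `δ : Γ`, the points of `Z ∩ δ⁻¹Z` moved by `δ` are covered by countably many Borel pieces `P`
with `P ∩ δP = ∅` (cut out by a countable separating family), and the involution exchanging `P`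
and `δP` lies in the full group; hence `B n` and `δ⁻¹ B n` asymptotically agree on `Z ∩ δ⁻¹Z`.
Pulling `B n` back along a Borel return map `y ↦ σ y • y` into `Z` (with `σ = 1` on `Z`) gives
`A n ⊆ Y` with `A n ∩ Z = B n`; on the piece where `σ y = α` and `σ (γ • y) = β`, the defect of
`A n` under `γ` is an `α`-translate of the defect of `B n` under `β * γ * α⁻¹`, so `A n` is
asymptotically invariant and strong ergodicity of `Y` applies to it.
-/

open MeasureTheory Filter Topology
open scoped ENNReal symmDiff Pointwise

theorem tendsto_measure_zero_of_tendsto_measure_inter {α ι β : Type*} [MeasurableSpace α]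
    {μ : Measure α} [IsFiniteMeasure μ] [Countable ι] {R : ι → Set α}
    (hR : ∀ i, MeasurableSet (R i)) {l : Filter β} {X : β → Set α}
    (hX : ∀ b, X b ⊆ ⋃ i, R i) (h : ∀ i, Tendsto (fun b => μ (R i ∩ X b)) l (𝓝 0)) :
    Tendsto (fun b => μ (X b)) l (𝓝 0) := by
  set T : Finset ι → Set α := fun s => (⋃ i, R i) \ ⋃ i ∈ s, R i
  have hT : Tendsto (fun s => μ (T s)) atTop (𝓝 0) := by
    have hT_anti : Antitone T := fun s t hst =>
      Set.sdiff_subset_sdiff_right (Set.biUnion_subset_biUnion_left hst)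
    have hT_empty : ⋂ s, T s = ∅ := by
      refine Set.eq_empty_of_forall_notMem fun x hx => ?_
      obtain ⟨i, hi⟩ := Set.mem_iUnion.1 (Set.mem_iInter.1 hx ∅).1
      exact (Set.mem_iInter.1 hx {i}).2 (Set.mem_biUnion (Finset.mem_singleton_self i) hi)
    have := tendsto_measure_iInter_atTop (μ := μ)
      (fun s => ((MeasurableSet.iUnion hR).diff
        (Finset.measurableSet_biUnion s fun i _ => hR i)).nullMeasurableSet)
      hT_anti ⟨∅, measure_ne_top μ _⟩
    rwa [hT_empty, measure_empty] at this
  rw [ENNReal.tendsto_nhds_zero]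
  intro ε hε
  have hε2 : 0 < ε / 2 := ENNReal.half_pos hε.ne'
  obtain ⟨s, hs⟩ := (ENNReal.tendsto_nhds_zero.1 hT _ hε2).exists
  have hsum : Tendsto (fun b => ∑ i ∈ s, μ (R i ∩ X b)) l (𝓝 0) := by
    simpa using tendsto_finsetSum s fun i _ => h i
  filter_upwards [ENNReal.tendsto_nhds_zero.1 hsum _ hε2] with b hb
  have hcover : X b ⊆ (⋃ i ∈ s, R i ∩ X b) ∪ T s := by
    intro x hx
    by_cases hxs : x ∈ ⋃ i ∈ s, R i
    · obtain ⟨i, hi, hxi⟩ := Set.mem_iUnion₂.1 hxs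
      exact Or.inl (Set.mem_biUnion hi ⟨hxi, hx⟩)
    · exact Or.inr ⟨hX b hx, hxs⟩
  calc μ (X b) ≤ μ (⋃ i ∈ s, R i ∩ X b) + μ (T s) :=
        (measure_mono hcover).trans (measure_union_le _ _)
    _ ≤ ∑ i ∈ s, μ (R i ∩ X b) + μ (T s) := by gcongr; exact measure_biUnion_finset_le s _
    _ ≤ ε / 2 + ε / 2 := add_le_add hb hs
    _ = ε := ENNReal.add_halves ε

theorem inv_mul_measure_inter_mul_le {Y : Type*} [MeasurableSpace Y] (μ : Measure Y)
    [IsProbabilityMeasure μ] {Z A : Set Y} (hZ : μ Z ≠ 0) (hA : MeasurableSet A) :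
    (μ Z)⁻¹ * μ (A ∩ Z) * (1 - (μ Z)⁻¹ * μ (A ∩ Z)) ≤ (μ Z)⁻¹ ^ 2 * (μ A * (1 - μ A)) := by
  have hZc : 1 - (μ Z)⁻¹ * μ (A ∩ Z) ≤ (μ Z)⁻¹ * μ (Z \ A) := by
    rw [tsub_le_iff_right, ← mul_add, ← ENNReal.inv_mul_cancel hZ (measure_ne_top μ Z),
      Set.inter_comm, add_comm]
    gcongr
    exact measure_le_inter_add_sdiff μ Z A
  have hdiff : μ (Z \ A) ≤ 1 - μ A :=
    prob_compl_eq_one_sub (μ := μ) hA ▸ measure_mono (Set.sdiff_subset_compl Z A)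
  calc (μ Z)⁻¹ * μ (A ∩ Z) * (1 - (μ Z)⁻¹ * μ (A ∩ Z))
      ≤ (μ Z)⁻¹ * μ A * ((μ Z)⁻¹ * (1 - μ A)) := by
        gcongr
        · exact Set.inter_subset_left
        · exact hZc.trans (by gcongr)
    _ = (μ Z)⁻¹ ^ 2 * (μ A * (1 - μ A)) := by ring

theorem MeasurableSpace.exists_countable_separating_mem_notMem {Y : Type*} [MeasurableSpace Y]
    [MeasurableSpace.CountablySeparated Y] :
    ∃ 𝒯 : Set (Set Y), 𝒯.Countable ∧ (∀ t ∈ 𝒯, MeasurableSet t) ∧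
      ∀ x y : Y, x ≠ y → ∃ t ∈ 𝒯, x ∈ t ∧ y ∉ t := by
  obtain ⟨S, hSc, hSm, hS⟩ := exists_countable_separating Y MeasurableSet Set.univ
  refine ⟨S ∪ compl '' S, hSc.union (hSc.image _), ?_, fun x y hxy => ?_⟩
  · rintro t (ht | ⟨s, hs, rfl⟩)
    exacts [hSm t ht, (hSm s hs).compl]
  · contrapose! hxy
    refine hS x trivial y trivial fun s hs => ⟨hxy s (Or.inl hs), fun hy => ?_⟩
    by_contra hx
    exact hxy sᶜ (Or.inr ⟨s, hs, rfl⟩) hx hy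

def MemFullGroup (Γ : Type*) {Y : Type*} [SMul Γ Y] [MeasurableSpace Y] {Z : Set Y}
    (φ : Z ≃ᵐ Z) : Prop :=
  ∀ z : Z, ∃ γ : Γ, γ • (z : Y) = φ z

section FullGroup

variable {Γ Y : Type*} [Group Γ] [MulAction Γ Y]

/-- Only the points of `Z ∩ δ⁻¹Z` are seen by the full group of the restriction to `Z`. -/
def restrictedSymmDiff (Z : Set Y) (δ : Γ) (B : Set Y) : Set Y :=
  Z ∩ (δ • ·) ⁻¹' Z ∩ (B ∆ ((δ • ·) ⁻¹' B))

open Classical in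
noncomputable def smulSwap (δ : Γ) (P : Set Y) (y : Y) : Y :=
  if y ∈ P then δ • y else if δ⁻¹ • y ∈ P then δ⁻¹ • y else y

theorem exists_smul_eq_smulSwap (δ : Γ) (P : Set Y) (y : Y) :
    ∃ γ : Γ, γ • y = smulSwap δ P y := by
  unfold smulSwap
  split_ifs
  exacts [⟨δ, rfl⟩, ⟨δ⁻¹, rfl⟩, ⟨1, one_smul Γ y⟩]

theorem smulSwap_of_mem {δ : Γ} {P : Set Y} {y : Y} (hy : y ∈ P) : smulSwap δ P y = δ • y := by
  simp [smulSwap, hy]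

theorem smulSwap_involutive {δ : Γ} {P : Set Y} (hP : ∀ y ∈ P, δ • y ∉ P) :
    Function.Involutive (smulSwap δ P) := by
  intro y
  by_cases hy : y ∈ P
  · simp [smulSwap, hy, hP y hy]
  · by_cases hy' : δ⁻¹ • y ∈ P <;> simp [smulSwap, hy, hy']

theorem smulSwap_mem {δ : Γ} {P Z : Set Y} (hPZ : P ⊆ Z) (hδPZ : ∀ y ∈ P, δ • y ∈ Z) {y : Y}
    (hy : y ∈ Z) : smulSwap δ P y ∈ Z := by
  unfold smulSwap
  split_ifs with h₁ h₂
  exacts [hδPZ y h₁, hPZ h₂, hy]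

variable [MeasurableSpace Y]

theorem measurable_smulSwap [MeasurableConstSMul Γ Y] (δ : Γ) {P : Set Y}
    (hP : MeasurableSet P) : Measurable (smulSwap δ P) := by
  classical
  exact (measurable_const_smul δ).ite hP
    ((measurable_const_smul δ⁻¹).ite (hP.preimage (measurable_const_smul δ⁻¹)) measurable_id)

theorem exists_memFullGroup_restrictedSymmDiff_subset [MeasurableConstSMul Γ Y] {δ : Γ}
    {Z P : Set Y} (hP : MeasurableSet P) (hPZ : P ⊆ Z) (hδPZ : ∀ y ∈ P, δ • y ∈ Z)
    (hPδ : ∀ y ∈ P, δ • y ∉ P) :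
    ∃ φ : Z ≃ᵐ Z, MemFullGroup Γ φ ∧
      ∀ B : Set Z,
        P ∩ restrictedSymmDiff Z δ (Subtype.val '' B) ⊆ Subtype.val '' ((φ '' B) ∆ B) := by
  have hmaps : Set.MapsTo (smulSwap δ P) Z Z := fun y hy => smulSwap_mem hPZ hδPZ hy
  have hinv : Function.Involutive (hmaps.restrict _ _ _) :=
    fun z => Subtype.ext (smulSwap_involutive hPδ z)
  refine ⟨MeasurableEquiv.ofInvolutive _ hinv
    ((measurable_smulSwap δ hP).subtype_map fun _ hy => hmaps hy),
    fun z => exists_smul_eq_smulSwap δ P z, fun B y ⟨hyP, ⟨hyZ, hδyZ⟩, hyB⟩ => ?_⟩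
  refine ⟨⟨y, hyZ⟩, ?_, rfl⟩
  have hswap : hmaps.restrict _ _ _ ⟨y, hyZ⟩ = ⟨δ • y, hδyZ⟩ :=
    Subtype.ext (smulSwap_of_mem hyP)
  have hy : (⟨y, hyZ⟩ : Z) ∈ B ↔ y ∈ Subtype.val '' B :=
    Subtype.val_injective.mem_set_image.symm
  have hδy : (⟨δ • y, hδyZ⟩ : Z) ∈ B ↔ δ • y ∈ Subtype.val '' B :=
    Subtype.val_injective.mem_set_image.symm
  rw [MeasurableEquiv.image_eq_preimage_symm]
  change (⟨y, hyZ⟩ : Z) ∈ (hmaps.restrict _ _ _ ⁻¹' B) ∆ B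
  rw [Set.mem_symmDiff, Set.mem_preimage, hswap, hy, hδy]
  rw [Set.mem_symmDiff] at hyB
  tauto

theorem tendsto_measure_restrictedSymmDiff [MeasurableConstSMul Γ Y]
    [MeasurableSpace.CountablySeparated Y] {μ : Measure Y} [IsFiniteMeasure μ] {Z : Set Y}
    (hZ : MeasurableSet Z) {B : ℕ → Set Z}
    (hB : ∀ φ : Z ≃ᵐ Z, MemFullGroup Γ φ →
      Tendsto (fun n => μ (Subtype.val '' ((φ '' B n) ∆ B n))) atTop (𝓝 0))
    (δ : Γ) : Tendsto (fun n => μ (restrictedSymmDiff Z δ (Subtype.val '' B n))) atTop (𝓝 0) := by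
  obtain ⟨𝒯, h𝒯c, h𝒯m, h𝒯⟩ := MeasurableSpace.exists_countable_separating_mem_notMem (Y := Y)
  have := h𝒯c.to_subtype
  set P : 𝒯 → Set Y := fun t => Z ∩ (δ • ·) ⁻¹' Z ∩ (t ∩ (δ • ·) ⁻¹' (↑t)ᶜ)
  have hPm : ∀ t, MeasurableSet (P t) := fun t =>
    (hZ.inter (hZ.preimage (measurable_const_smul δ))).inter
      ((h𝒯m t t.2).inter ((h𝒯m t t.2).compl.preimage (measurable_const_smul δ)))
  refine tendsto_measure_zero_of_tendsto_measure_inter hPm (fun n y ⟨hyZ, hyB⟩ => ?_) fun t => ?_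
  · have hδy : δ • y ≠ y := by
      intro h
      rw [Set.mem_symmDiff, Set.mem_preimage, h] at hyB
      tauto
    obtain ⟨t, ht, hyt, hδyt⟩ := h𝒯 y (δ • y) hδy.symm
    exact Set.mem_iUnion.2 ⟨⟨t, ht⟩, hyZ, hyt, hδyt⟩
  · obtain ⟨φ, hφ, hsub⟩ := exists_memFullGroup_restrictedSymmDiff_subset (hPm t)
      (fun y hy => hy.1.1) (fun y hy => hy.1.2) (fun y hy hδy => hy.2.2 hδy.2.1)
    exact tendsto_of_tendsto_of_tendsto_of_le_of_le tendsto_const_nhds (hB φ hφ)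
      (fun _ => zero_le) fun n => measure_mono (hsub (B n))

end FullGroup

section Saturation

variable {Γ Y : Type*} [Group Γ] [MulAction Γ Y] [MeasurableSpace Y] [Countable Γ]
  [MeasurableConstSMul Γ Y]

theorem exists_selector_smul_mem {Z : Set Y} (hZ : MeasurableSet Z) :
    ∃ σ : Y → Γ, (∀ γ, MeasurableSet (σ ⁻¹' {γ})) ∧ (∀ y ∈ Z, σ y = 1) ∧
      ∀ (y : Y) (γ : Γ), γ • y ∈ Z → σ y • y ∈ Z := by
  classical
  -- `σ y` is the first element, in an enumeration of `Γ` starting at `1`, moving `y` into `Z`.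
  obtain ⟨e', he'⟩ := exists_surjective_nat Γ
  set e : ℕ → Γ := fun k => Nat.casesOn k 1 e'
  set W : Set Y := ⋃ k, (e k • ·) ⁻¹' Z
  have hp : ∀ y, ∃ k, e k • y ∈ Z ∨ y ∉ W := fun y => by
    by_cases hy : y ∈ W
    · obtain ⟨k, hk⟩ := Set.mem_iUnion.1 hy
      exact ⟨k, Or.inl hk⟩
    · exact ⟨0, Or.inr hy⟩
  have hfind : Measurable fun y => Nat.find (hp y) :=
    measurable_find hp fun k => (hZ.preimage (measurable_const_smul _)).union
      (MeasurableSet.iUnion fun j => hZ.preimage (measurable_const_smul _)).compl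
  refine ⟨fun y => e (Nat.find (hp y)), fun γ => hfind (.of_discrete (s := e ⁻¹' {γ})),
    fun y hy => ?_, fun y γ hγ => ?_⟩
  · change e (Nat.find (hp y)) = 1
    rw [(Nat.find_eq_zero (hp y)).2 (Or.inl (by rwa [show e 0 = 1 from rfl, one_smul]))]
    rfl
  · obtain ⟨k, rfl⟩ := he' γ
    exact (Nat.find_spec (hp y)).resolve_right (not_not.2 (Set.mem_iUnion.2 ⟨k + 1, hγ⟩))

theorem measurable_selector_smul {σ : Y → Γ} (hσ : ∀ γ, MeasurableSet (σ ⁻¹' {γ})) :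
    Measurable fun y => σ y • y := by
  intro s hs
  have hpre : (fun y => σ y • y) ⁻¹' s = ⋃ γ, σ ⁻¹' {γ} ∩ (γ • ·) ⁻¹' s := by
    ext y
    simp
  rw [hpre]
  exact .iUnion fun γ => (hσ γ).inter (hs.preimage (measurable_const_smul γ))

theorem exists_extension_tendsto_measure_smul_symmDiff {μ : Measure Y}
    [SMulInvariantMeasure Γ Y μ] [IsFiniteMeasure μ] {Z : Set Y} (hZ : MeasurableSet Z)
    {B : ℕ → Set Y} (hBm : ∀ n, MeasurableSet (B n)) (hBZ : ∀ n, B n ⊆ Z)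
    (hB : ∀ δ : Γ, Tendsto (fun n => μ (restrictedSymmDiff Z δ (B n))) atTop (𝓝 0)) :
    ∃ A : ℕ → Set Y, (∀ n, MeasurableSet (A n)) ∧ (∀ n, A n ∩ Z = B n) ∧
      ∀ γ : Γ, Tendsto (fun n => μ ((γ • A n) ∆ A n)) atTop (𝓝 0) := by
  obtain ⟨σ, hσm, hσZ, hσ⟩ := exists_selector_smul_mem (Γ := Γ) hZ
  refine ⟨fun n => (fun y => σ y • y) ⁻¹' B n, fun n => measurable_selector_smul hσm (hBm n),
    fun n => ?_, fun γ => ?_⟩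
  · ext y
    constructor
    · rintro ⟨hyA, hyZ⟩
      simpa [hσZ y hyZ] using hyA
    · intro hy
      exact ⟨by simpa [hσZ y (hBZ n hy)] using hy, hBZ n hy⟩
  obtain ⟨γ, rfl⟩ : ∃ γ', γ = γ'⁻¹ := ⟨γ⁻¹, (inv_inv γ).symm⟩
  simp only [← Set.preimage_smul_inv, inv_inv]
  set C : Γ × Γ → Set Y := fun p => σ ⁻¹' {p.1} ∩ (γ • ·) ⁻¹' (σ ⁻¹' {p.2})
  refine tendsto_measure_zero_of_tendsto_measure_inter
    (fun p => (hσm p.1).inter ((hσm p.2).preimage (measurable_const_smul γ)))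
    (fun n y _ => Set.mem_iUnion.2 ⟨(σ y, σ (γ • y)), rfl, rfl⟩) fun ⟨α, β⟩ => ?_
  refine tendsto_of_tendsto_of_tendsto_of_le_of_le tendsto_const_nhds (hB (β * γ * α⁻¹))
    (fun _ => zero_le) fun n => ?_
  rw [← measure_smul μ α]
  refine measure_mono (Set.smul_set_subset_iff.2 fun y ⟨⟨hyα, hyβ⟩, hy⟩ => ?_)
  simp only [Set.mem_preimage, Set.mem_singleton_iff] at hyα hyβ
  have hδ : (β * γ * α⁻¹) • α • y = β • γ • y := by simp [mul_smul]
  simp only [Set.mem_symmDiff, Set.mem_preimage, hyα, hyβ] at hy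
  have horbit : α • y ∈ Z ↔ β • γ • y ∈ Z :=
    ⟨fun h => hyβ ▸ hσ (γ • y) (α * γ⁻¹) (by simpa [mul_smul] using h),
      fun h => hyα ▸ hσ y (β * γ) (by simpa [mul_smul] using h)⟩
  have hyZ : α • y ∈ Z := by
    rcases hy with ⟨h, -⟩ | ⟨h, -⟩
    exacts [horbit.2 (hBZ n h), hBZ n h]
  refine ⟨⟨hyZ, by rw [Set.mem_preimage, hδ]; exact horbit.1 hyZ⟩, ?_⟩
  rw [Set.mem_symmDiff, Set.mem_preimage, hδ]
  tauto

end Saturation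

theorem strongly_ergodic_restriction_general
    {Γ Y : Type*} [Group Γ] [Countable Γ]
    [MeasurableSpace Y] [StandardBorelSpace Y]
    (μ : Measure Y) [IsProbabilityMeasure μ] [MulAction Γ Y]
    (hpres : ∀ γ : Γ, MeasurePreserving (fun y : Y => γ • y) μ μ)
    (hSE : ∀ B : ℕ → Set Y, (∀ n, MeasurableSet (B n)) →
      (∀ γ : Γ, Tendsto (fun n => μ (symmDiff ((γ • ·) '' B n) (B n))) atTop (𝓝 0)) →
      Tendsto (fun n => μ (B n) * (1 - μ (B n))) atTop (𝓝 0))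
    (Z : Set Y) (hZmeas : MeasurableSet Z) (hZpos : 0 < μ Z) :
    ∀ B : ℕ → Set Z, (∀ n, MeasurableSet (B n)) →
      (∀ φ : Z ≃ᵐ Z, (∀ z : Z, ∃ γ : Γ, γ • (z : Y) = (φ z : Y)) →
        Tendsto (fun n =>
          ((μ Z)⁻¹ • Measure.comap (Subtype.val : Z → Y) μ) (symmDiff (⇑φ '' B n) (B n)))
          atTop (𝓝 0)) →
      Tendsto (fun n =>
        ((μ Z)⁻¹ • Measure.comap (Subtype.val : Z → Y) μ) (B n) *
          (1 - ((μ Z)⁻¹ • Measure.comap (Subtype.val : Z → Y) μ) (B n))) atTop (𝓝 0) := by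
  intro B hB hinv
  have : MeasurableConstSMul Γ Y := ⟨fun γ => (hpres γ).measurable⟩
  have : SMulInvariantMeasure Γ Y μ :=
    ⟨fun γ _ hs => (hpres γ).measure_preimage hs.nullMeasurableSet⟩
  have hemb := MeasurableEmbedding.subtype_coe hZmeas
  have hν : ∀ s, ((μ Z)⁻¹ • Measure.comap Subtype.val μ) s = (μ Z)⁻¹ * μ (Subtype.val '' s) :=
    fun s => by rw [Measure.smul_apply, smul_eq_mul, hemb.comap_apply]
  have hfull (φ : Z ≃ᵐ Z) (hφ : MemFullGroup Γ φ) :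
      Tendsto (fun n => μ (Subtype.val '' ((φ '' B n) ∆ B n))) atTop (𝓝 0) := by
    simpa only [hν, ENNReal.mul_inv_cancel_left hZpos.ne' (measure_ne_top μ Z), mul_zero]
      using ENNReal.Tendsto.const_mul (a := μ Z) (hinv φ hφ) (Or.inr (measure_ne_top μ Z))
  obtain ⟨A, hAm, hAZ, hAinv⟩ := exists_extension_tendsto_measure_smul_symmDiff hZmeas
    (fun n => hemb.measurableSet_image' (hB n)) (fun n => Subtype.coe_image_subset Z (B n))
    (tendsto_measure_restrictedSymmDiff hZmeas hfull)
  have hA := ENNReal.Tendsto.const_mul (a := (μ Z)⁻¹ ^ 2) (hSE A hAm hAinv)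
    (Or.inr (ENNReal.pow_ne_top (ENNReal.inv_ne_top.2 hZpos.ne')))
  rw [mul_zero] at hA
  refine tendsto_of_tendsto_of_tendsto_of_le_of_le tendsto_const_nhds hA (fun _ => zero_le)
    fun n => ?_
  simpa only [hν, ← hAZ n] using inv_mul_measure_inter_mul_le μ hZpos.ne' (hAm n)

/-- If `Γ ⊷ (Y, μ)` is a strongly ergodic measure-preserving action of a
countable group on a standard probability space and `Z` is a Borel subset of `Y` with
`μ Z > 0`, then the restriction of the orbit equivalence relation to `Z`, with the
normalized measure `μ / μ Z`, is strongly ergodic. -/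
theorem strongly_ergodic_restriction
    {Γ Y : Type*} [Group Γ] [Countable Γ]
    [MeasurableSpace Y] [StandardBorelSpace Y]
    (μ : Measure Y) [IsProbabilityMeasure μ] [MulAction Γ Y]
    (hmeas : ∀ γ : Γ, Measurable fun y : Y => γ • y)
    (hpres : ∀ γ : Γ, MeasurePreserving (fun y : Y => γ • y) μ μ)
    (hSE : ∀ B : ℕ → Set Y, (∀ n, MeasurableSet (B n)) →
      (∀ γ : Γ, Tendsto (fun n => μ (symmDiff ((γ • ·) '' B n) (B n))) atTop (𝓝 0)) →
      Tendsto (fun n => μ (B n) * (1 - μ (B n))) atTop (𝓝 0))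
    (Z : Set Y) (hZmeas : MeasurableSet Z) (hZpos : 0 < μ Z) :
    ∀ B : ℕ → Set Z, (∀ n, MeasurableSet (B n)) →
      (∀ φ : Z ≃ᵐ Z, (∀ z : Z, ∃ γ : Γ, γ • (z : Y) = (φ z : Y)) →
        Tendsto (fun n =>
          ((μ Z)⁻¹ • Measure.comap (Subtype.val : Z → Y) μ) (symmDiff (⇑φ '' B n) (B n)))
          atTop (𝓝 0)) →
      Tendsto (fun n =>
        ((μ Z)⁻¹ • Measure.comap (Subtype.val : Z → Y) μ) (B n) *
          (1 - ((μ Z)⁻¹ • Measure.comap (Subtype.val : Z → Y) μ) (B n))) atTop (𝓝 0) :=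
  strongly_ergodic_restriction_general μ hpres hSE Z hZmeas hZpos
end

section
/- Every end of an infinite, locally finite, connected countable graph is realized by an infinite injective path: for every end ξ there is an injective path c : ℕ → V such that for every finite K ⊆ V, the path c eventually lies in ξ(K). -/
/-!
Grow a path from a vertex `v₀ ∈ ξ ∅` together with finite sets `K₀ ⊆ K₁ ⊆ ⋯` exhausting `V`,
keeping the invariant that the path meets `ξ Kₙ` only in its endpoint `w`. With
`Kₙ₊₁ = Kₙ ∪ {w, eₙ}` (`e` an enumeration of `V`), walk inside `ξ Kₙ` from `w` to the first
vertex of `ξ Kₙ₊₁ ⊆ ξ Kₙ`; as the old path meets `ξ Kₙ` only at `w`, the extension is still a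
path. The limit ray is injective and visits every `ξ K` arbitrarily late. Since it eventually
avoids the finite set `K`, and `ξ K` is closed under edges avoiding `K`, it eventually stays in
`ξ K`.
-/

open Filter

namespace SimpleGraph

variable {V : Type*} {G : SimpleGraph V}

namespace Walk

theorem IsPath.append {u v w : V} {p : G.Walk u v} {q : G.Walk v w} (hp : p.IsPath)
    (hq : q.IsPath) (h : ∀ x ∈ p.support, x ∈ q.support → x = v) : (p.append q).IsPath := by
  have hv : v ∉ q.support.tail := by
    have := hq.support_nodup
    rw [← q.cons_tail_support, List.nodup_cons] at this
    exact this.1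
  rw [isPath_def, support_append, List.nodup_append]
  refine ⟨hp.support_nodup, hq.support_nodup.sublist (List.tail_sublist _), ?_⟩
  rintro x hxp _ hxq rfl
  exact hv (h x hxp (List.mem_of_mem_tail hxq) ▸ hxq)

theorem exists_walk_to_first_mem {T : Set V} {u v : V} (p : G.Walk u v) (hv : v ∈ T) :
    ∃ x ∈ T, ∃ q : G.Walk u x, q.support ⊆ p.support ∧ ∀ y ∈ q.support, y ∈ T → y = x := by
  induction p with
  | nil => exact ⟨_, hv, nil, by simp, by simp⟩
  | @cons u _ _ h p ih =>
    by_cases hu : u ∈ T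
    · exact ⟨u, hu, nil, by simp, by simp⟩
    obtain ⟨x, hx, q, hsub, hfirst⟩ := ih hv
    refine ⟨x, hx, cons h q, List.cons_subset_cons _ hsub, ?_⟩
    simp only [support_cons, List.mem_cons, forall_eq_or_imp]
    exact ⟨fun hu' => absurd hu' hu, hfirst⟩

theorem exists_isPath_to_first_mem {T : Set V} {u v : V} (p : G.Walk u v) (hv : v ∈ T) :
    ∃ x ∈ T, ∃ q : G.Walk u x, q.IsPath ∧ q.support ⊆ p.support ∧
      ∀ y ∈ q.support, y ∈ T → y = x := by
  classical
  obtain ⟨x, hx, q, hsub, hfirst⟩ := p.exists_walk_to_first_mem hv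
  have hbypass := q.support_bypass_subset_support
  exact ⟨x, hx, q.bypass, q.bypass_isPath, fun y hy => hsub (hbypass hy),
    fun y hy => hfirst y (hbypass hy)⟩

section Growing

variable {u : V} {w : ℕ → V}

def IsGrowing (p : ∀ n, G.Walk u (w n)) : Prop :=
  ∀ n, ∃ q : G.Walk (w n) (w (n + 1)), 0 < q.length ∧ p (n + 1) = (p n).append q

variable {p : ∀ n, G.Walk u (w n)}

theorem IsGrowing.strictMono_length (hp : IsGrowing p) : StrictMono fun n => (p n).length := by
  refine strictMono_nat_of_lt_succ fun n => ?_
  obtain ⟨q, hq, hpq⟩ := hp n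
  rw [hpq, length_append]
  omega

theorem IsGrowing.getVert_eq (hp : IsGrowing p) {n m i : ℕ} (hnm : n ≤ m)
    (hi : i ≤ (p n).length) :
    (p m).getVert i = (p n).getVert i := by
  induction m, hnm using Nat.le_induction with
  | base => rfl
  | succ m hnm ih =>
    obtain ⟨q, -, hpq⟩ := hp m
    have hlen : i ≤ (p m).length := hi.trans (hp.strictMono_length.monotone hnm)
    rw [hpq, getVert_append', if_pos hlen, ih]

theorem IsGrowing.exists_ray (hp : IsGrowing p) (hpath : ∀ n, (p n).IsPath) :
    ∃ c : ℕ → V, Function.Injective c ∧ (∀ k, G.Adj (c k) (c (k + 1))) ∧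
      ∀ n, ∃ k ≥ n, c k = w n := by
  have hlen : ∀ n, n ≤ (p n).length := hp.strictMono_length.id_le
  have hc : ∀ n i, i ≤ (p n).length → (p i).getVert i = (p n).getVert i := by
    intro n i hi
    rcases le_total n i with hni | hin
    · exact hp.getVert_eq hni hi
    · exact (hp.getVert_eq hin (hlen i)).symm
  refine ⟨fun k => (p k).getVert k, ?_, fun k => ?_, fun n => ⟨_, hlen n, ?_⟩⟩
  · intro i j hij
    have hi : i ≤ (p (max i j)).length := (le_max_left i j).trans (hlen _)
    have hj : j ≤ (p (max i j)).length := (le_max_right i j).trans (hlen _)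
    exact (hpath _).getVert_injOn hi hj <| by simpa only [hc _ i hi, hc _ j hj] using hij
  · dsimp only
    rw [hc (k + 1) k ((Nat.le_succ k).trans (hlen _)), hc (k + 1) (k + 1) (hlen _)]
    exact adj_getVert_succ _ (hlen _)
  · dsimp only
    rw [hc n _ le_rfl, getVert_length]

end Growing

end Walk

def IsComponentCompl (G : SimpleGraph V) (K : Finset V) (S : Set V) : Prop :=
  ∃ v ∉ K, S = {u | Relation.ReflTransGen
    (fun a b => G.Adj a b ∧ a ∉ (K : Set V) ∧ b ∉ (K : Set V)) v u}

namespace IsComponentCompl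

variable {K : Finset V} {S : Set V}

theorem nonempty (h : G.IsComponentCompl K S) : S.Nonempty := by
  obtain ⟨v, -, rfl⟩ := h
  exact ⟨v, .refl⟩

theorem notMem (h : G.IsComponentCompl K S) {x : V} (hx : x ∈ S) : x ∉ K := by
  obtain ⟨v, hv, rfl⟩ := h
  induction hx with
  | refl => exact hv
  | tail _ hbc _ => exact hbc.2.2

theorem mem_of_adj (h : G.IsComponentCompl K S) {a b : V} (ha : a ∈ S) (hab : G.Adj a b)
    (hb : b ∉ K) : b ∈ S := by
  have haK := h.notMem ha
  obtain ⟨v, -, rfl⟩ := h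
  exact ha.tail ⟨hab, haK, hb⟩

theorem exists_walk (h : G.IsComponentCompl K S) {a b : V} (ha : a ∈ S) (hb : b ∈ S) :
    ∃ p : G.Walk a b, ∀ y ∈ p.support, y ∈ S := by
  have hab : Relation.ReflTransGen
      (fun a b => G.Adj a b ∧ a ∉ (K : Set V) ∧ b ∉ (K : Set V)) a b := by
    obtain ⟨v, -, rfl⟩ := h
    have : Std.Symm fun a b => G.Adj a b ∧ a ∉ (K : Set V) ∧ b ∉ (K : Set V) :=
      ⟨fun _ _ hab => ⟨hab.1.symm, hab.2.2, hab.2.1⟩⟩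
    exact (Relation.ReflTransGen.stdSymm.symm _ _ ha).trans hb
  clear hb
  induction hab with
  | refl => exact ⟨Walk.nil, by simpa using ha⟩
  | @tail c d _ hcd ih =>
    obtain ⟨p, hp⟩ := ih
    refine ⟨p.concat hcd.1, ?_⟩
    simp only [Walk.support_concat, List.mem_append, List.mem_singleton]
    rintro y (hy | rfl)
    · exact hp y hy
    · exact h.mem_of_adj (hp c p.end_mem_support) hcd.1 hcd.2.2

theorem eventually_mem (h : G.IsComponentCompl K S) {c : ℕ → V} (hinj : Function.Injective c)
    (hadj : ∀ n, G.Adj (c n) (c (n + 1))) (hfreq : ∃ᶠ n in atTop, c n ∈ S) :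
    ∀ᶠ n in atTop, c n ∈ S := by
  have hK : ∀ᶠ n in atTop, c n ∉ K :=
    Nat.cofinite_eq_atTop ▸ hinj.tendsto_cofinite.eventually K.eventually_cofinite_notMem
  obtain ⟨N, hN⟩ := eventually_atTop.1 hK
  obtain ⟨n₀, hn₀N, hn₀⟩ := frequently_atTop.1 hfreq N
  filter_upwards [eventually_ge_atTop n₀] with n hn
  induction n, hn using Nat.le_induction with
  | base => exact hn₀
  | succ n hn ih => exact h.mem_of_adj ih (hadj n) (hN _ (by omega))

end IsComponentCompl

variable (G) (ξ : Finset V → Set V) (v₀ : V)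

structure EndPath where
  K : Finset V
  w : V
  walk : G.Walk v₀ w
  isPath : walk.IsPath
  mem : w ∈ ξ K
  eq_of_mem : ∀ y ∈ walk.support, y ∈ ξ K → y = w

variable {G ξ v₀}

theorem EndPath.exists_extend (hcomp : ∀ K, G.IsComponentCompl K (ξ K))
    (hmono : ∀ K K' : Finset V, K ⊆ K' → ξ K' ⊆ ξ K) (a : EndPath G ξ v₀) (x : V) :
    ∃ b : EndPath G ξ v₀, a.K ⊆ b.K ∧ x ∈ b.K ∧
      ∃ q : G.Walk a.w b.w, 0 < q.length ∧ b.walk = a.walk.append q := by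
  classical
  set K' := insert x (insert a.w a.K)
  have hKK' : a.K ⊆ K' := (Finset.subset_insert _ _).trans (Finset.subset_insert _ _)
  have hwK' : a.w ∉ ξ K' := fun hw => (hcomp K').notMem hw (by simp [K'])
  obtain ⟨t, ht⟩ := (hcomp K').nonempty
  obtain ⟨r, hr⟩ := (hcomp a.K).exists_walk a.mem (hmono _ _ hKK' ht)
  obtain ⟨y, hy, q, hq, hsub, hfirst⟩ := r.exists_isPath_to_first_mem ht
  have hqK : ∀ z ∈ q.support, z ∈ ξ a.K := fun z hz => hr z (hsub hz)
  have hpath : (a.walk.append q).IsPath :=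
    a.isPath.append hq fun z hz hzq => a.eq_of_mem z hz (hqK z hzq)
  refine ⟨⟨K', y, a.walk.append q, hpath, hy, fun z hz hzK' => ?_⟩, hKK', by simp [K'], q, ?_, rfl⟩
  · rcases (Walk.mem_support_append_iff _ _).1 hz with hz | hz
    · exact absurd (a.eq_of_mem z hz (hmono _ _ hKK' hzK') ▸ hzK') hwK'
    · exact hfirst z hz hzK'
  · refine Nat.pos_of_ne_zero fun hq0 => hwK' ?_
    exact Walk.eq_of_length_eq_zero hq0 ▸ hy

end SimpleGraph

open SimpleGraph

theorem end_realized_by_injective_path_general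
    {V : Type*} [Countable V]
    (G : SimpleGraph V)
    (ξ : Finset V → Set V)
    (hcomp : ∀ K : Finset V, ∃ v : V, v ∉ K ∧
      ξ K = {u | Relation.ReflTransGen
        (fun a b => G.Adj a b ∧ a ∉ (K : Set V) ∧ b ∉ (K : Set V)) v u})
    (hmono : ∀ K K' : Finset V, K ⊆ K' → ξ K' ⊆ ξ K) :
    ∃ c : ℕ → V, Function.Injective c ∧ (∀ n, G.Adj (c n) (c (n + 1))) ∧
      ∀ K : Finset V, ∃ N, ∀ n ≥ N, c n ∈ ξ K := by
  replace hcomp : ∀ K, G.IsComponentCompl K (ξ K) := hcomp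
  obtain ⟨v₀, hv₀⟩ := (hcomp ∅).nonempty
  have : Nonempty V := ⟨v₀⟩
  obtain ⟨e, he⟩ := exists_surjective_nat V
  choose step hstepK hstepe hstep using EndPath.exists_extend hcomp hmono
  let a : ℕ → EndPath G ξ v₀ := fun n =>
    Nat.rec ⟨∅, v₀, .nil, .nil, hv₀, by simp⟩ (fun m b => step b (e m)) n
  obtain ⟨c, hinj, hadj, hc⟩ := Walk.IsGrowing.exists_ray (p := fun n => (a n).walk)
    (fun n => hstep (a n) (e n)) (fun n => (a n).isPath)
  refine ⟨c, hinj, hadj, fun K => eventually_atTop.1 ((hcomp K).eventually_mem hinj hadj ?_)⟩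
  have hexhaust : ∀ᶠ n in atTop, K ⊆ (a n).K := by
    have hmonoK : Monotone fun n => (a n).K := monotone_nat_of_le_succ fun n => hstepK _ _
    refine (eventually_all_finset K).2 fun x _ => ?_
    obtain ⟨m, rfl⟩ := he x
    exact eventually_atTop.2 ⟨m + 1, fun n hn => hmonoK hn (hstepe _ _)⟩
  obtain ⟨N, hN⟩ := eventually_atTop.1 hexhaust
  refine frequently_atTop.2 fun M => ?_
  obtain ⟨k, hk, hck⟩ := hc (max M N)
  exact ⟨k, (le_max_left M N).trans hk,
    hck ▸ hmono _ _ (hN _ (le_max_right M N)) (a (max M N)).mem⟩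

/-- Every end of an infinite, locally finite, connected countable graph
is realized by an infinite injective path. Here an end is a map `ξ` assigning to each
finite vertex set `K` an infinite connected component `ξ K` of its complement
(a component being the set of vertices reachable from some `v ∉ K` by paths avoiding
`K`), compatibly: `K ⊆ K' → ξ K' ⊆ ξ K`. The conclusion: there is an injective path
`c : ℕ → V` along edges of `G` that eventually lies in `ξ K` for every finite `K`. -/
theorem end_realized_by_injective_path
    {V : Type*} [Countable V] [Infinite V]
    (G : SimpleGraph V) (hconn : G.Connected) (hlf : G.LocallyFinite)
    (ξ : Finset V → Set V)
    (hcomp : ∀ K : Finset V, ∃ v : V, v ∉ K ∧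
      ξ K = {u | Relation.ReflTransGen
        (fun a b => G.Adj a b ∧ a ∉ (K : Set V) ∧ b ∉ (K : Set V)) v u})
    (hinf : ∀ K : Finset V, (ξ K).Infinite)
    (hmono : ∀ K K' : Finset V, K ⊆ K' → ξ K' ⊆ ξ K) :
    ∃ c : ℕ → V, Function.Injective c ∧ (∀ n, G.Adj (c n) (c (n + 1))) ∧
      ∀ K : Finset V, ∃ N, ∀ n ≥ N, c n ∈ ξ K :=
  end_realized_by_injective_path_general G ξ hcomp hmono
end
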